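/- Let Γ be a group generated by a subgroup Γ₀ together with one element t, and let ρ_i : Γ → SL(2,ℂ) be a sequence of group homomorphisms. Assume: (i) for every g ∈ Γ₀ the sequence (ρ_i(g)) converges in SL(2,ℂ); (ii) there exist γ, δ ∈ Γ₀ with tγt⁻¹ ∈ Γ₀ and tδt⁻¹ ∈ Γ₀ such that the limits of (ρ_i(γ)) and (ρ_i(δ)) are loxodromic elements with no common eigenvector in ℂ². Then the sequence (ρ_i(t)) has a convergent subsequence in SL(2,ℂ), and consequently there is a subsequence (ρ_{i_k}) such that (ρ_{i_k}(g)) converges in SL(2,ℂ) for every g ∈ Γ. -/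

import Mathlib

open Matrix Filter Topology

abbrev SL2C := Matrix.SpecialLinearGroup (Fin 2) ℂ

/-- An element of SL(2,ℂ) is loxodromic if there is no real `r` with `0 ≤ r ≤ 4`
such that `(tr A)² = r`. -/
def Loxodromic (A : SL2C) : Prop :=
  ¬ ∃ r : ℝ, 0 ≤ r ∧ r ≤ 4 ∧
    (Matrix.trace (A : Matrix (Fin 2) (Fin 2) ℂ)) ^ 2 = (r : ℂ)

/-- Convergence in SL(2,ℂ), in the topology induced from the 2×2 complex matrices. -/
def SLTendsto (A : ℕ → SL2C) (L : SL2C) : Prop :=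
  Filter.Tendsto (fun i => (A i : Matrix (Fin 2) (Fin 2) ℂ)) Filter.atTop
    (nhds (L : Matrix (Fin 2) (Fin 2) ℂ))

/-- `A` and `B` have no common eigenvector in ℂ². -/
def NoCommonEigenvector (A B : SL2C) : Prop :=
  ¬ ∃ v : Fin 2 → ℂ, v ≠ 0 ∧
    (∃ μ : ℂ, (A : Matrix (Fin 2) (Fin 2) ℂ).mulVec v = μ • v) ∧
    (∃ ν : ℂ, (B : Matrix (Fin 2) (Fin 2) ℂ).mulVec v = ν • v)

/-!
Conjugation by `ρᵢ(t⁻¹)` carries `ρᵢ(tγt⁻¹)` and `ρᵢ(tδt⁻¹)` to `ρᵢ(γ)` and `ρᵢ(δ)`, and all four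
sequences converge. If `‖ρᵢ(t⁻¹)‖ → ∞`, rescale to norm one and extract a limit `S`: then `S ≠ 0`,
`det S = 0` (the determinants are the squared scale factors), and `S` intertwines the limits, so the
line `S(ℂ²)` is an eigenline of both `lim ρᵢ(γ)` and `lim ρᵢ(δ)`. Otherwise `ρᵢ(t⁻¹)` is frequently
bounded, hence has a subsequence converging in the closed subset `SL(2,ℂ)` of the matrices. The
elements on which this subsequence of representations converges form a subgroup containing `Γ₀`
and `t`, hence all of `Γ`.
-/

open scoped MatrixGroups

attribute [local instance] Matrix.normedAddCommGroup Matrix.normedSpace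

section CommonEigenvector

variable {K : Type*} [Field K]

lemma exists_eq_smul_of_mul_sub_mul_eq_zero {u v : Fin 2 → K} (hu : u ≠ 0)
    (h : v 0 * u 1 - v 1 * u 0 = 0) : ∃ μ : K, v = μ • u := by
  have hu' : u 0 ≠ 0 ∨ u 1 ≠ 0 := by
    by_contra! hc
    exact hu (funext (Fin.forall_fin_two.2 hc))
  rcases hu' with h0 | h1
  · refine ⟨v 0 / u 0, funext (Fin.forall_fin_two.2 ⟨?_, ?_⟩)⟩ <;>
      simp only [Pi.smul_apply, smul_eq_mul] <;> field_simp
    linear_combination -h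
  · refine ⟨v 1 / u 1, funext (Fin.forall_fin_two.2 ⟨?_, ?_⟩)⟩ <;>
      simp only [Pi.smul_apply, smul_eq_mul] <;> field_simp
    linear_combination h

lemma Matrix.exists_mulVec_eq_smul_of_det_eq_zero {S : Matrix (Fin 2) (Fin 2) K}
    (hS : S.det = 0) {x : Fin 2 → K} (hx : S *ᵥ x ≠ 0) (y : Fin 2 → K) :
    ∃ μ : K, S *ᵥ y = μ • S *ᵥ x := by
  refine exists_eq_smul_of_mul_sub_mul_eq_zero hx ?_
  rw [det_fin_two] at hS
  simp only [mulVec, dotProduct, Fin.sum_univ_two]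
  linear_combination (y 0 * x 1 - y 1 * x 0) * hS

lemma Matrix.exists_common_eigenvector_of_semiconjBy {S A B A' B' : Matrix (Fin 2) (Fin 2) K}
    (hS₀ : S ≠ 0) (hS : S.det = 0) (hAB : SemiconjBy S A B) (hAB' : SemiconjBy S A' B') :
    ∃ v ≠ 0, (∃ μ : K, B *ᵥ v = μ • v) ∧ ∃ ν : K, B' *ᵥ v = ν • v := by
  obtain ⟨x, hx⟩ : ∃ x, S *ᵥ x ≠ 0 := by
    by_contra! h
    exact hS₀ (ext_iff_mulVec.2 fun v => by rw [h, zero_mulVec])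
  have eigen {A B : Matrix (Fin 2) (Fin 2) K} (h : SemiconjBy S A B) :
      ∃ μ : K, B *ᵥ (S *ᵥ x) = μ • S *ᵥ x := by
    rw [mulVec_mulVec, ← h.eq, ← mulVec_mulVec]
    exact exists_mulVec_eq_smul_of_det_eq_zero hS hx _
  exact ⟨S *ᵥ x, hx, eigen hAB, eigen hAB'⟩

end CommonEigenvector

lemma SemiconjBy.of_tendsto {ι M : Type*} [TopologicalSpace M] [Mul M] [ContinuousMul M]
    [T2Space M] {l : Filter ι} [l.NeBot] {s a b : ι → M} {S A B : M}
    (h : ∀ i, SemiconjBy (s i) (a i) (b i)) (hs : Tendsto s l (𝓝 S)) (ha : Tendsto a l (𝓝 A))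
    (hb : Tendsto b l (𝓝 B)) : SemiconjBy S A B :=
  tendsto_nhds_unique (hs.mul ha) (by simpa only [(h _).eq] using hb.mul hs)

lemma exists_subseq_smul_tendsto_ne_zero {𝕜 E : Type*} [RCLike 𝕜] [NormedAddCommGroup E]
    [NormedSpace 𝕜 E] [ProperSpace E] {x : ℕ → E} (hx : Tendsto (‖x ·‖) atTop atTop) :
    ∃ c : ℕ → 𝕜, Tendsto c atTop (𝓝 0) ∧ ∃ φ : ℕ → ℕ, StrictMono φ ∧
      ∃ S ≠ 0, Tendsto (fun k => c (φ k) • x (φ k)) atTop (𝓝 S) := by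
  set c : ℕ → 𝕜 := fun i => ((‖x i‖⁻¹ : ℝ) : 𝕜)
  have hc : Tendsto c atTop (𝓝 0) := by
    simpa [c, Function.comp_def] using
      ((RCLike.continuous_ofReal (K := 𝕜)).tendsto 0).comp (tendsto_inv_atTop_zero.comp hx)
  have hsphere : ∀ᶠ i in atTop, c i • x i ∈ Metric.sphere (0 : E) 1 := by
    filter_upwards [hx.eventually_gt_atTop 0] with i hi
    simp [c, norm_smul, hi.ne']
  obtain ⟨S, hS, φ, hφ, hlim⟩ := (isCompact_sphere (0 : E) 1).tendsto_subseq' hsphere.frequently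
  exact ⟨c, hc, φ, hφ, S, ne_zero_of_mem_unit_sphere (⟨S, hS⟩ : Metric.sphere (0 : E) 1), hlim⟩

namespace Matrix.SpecialLinearGroup

variable {𝕜 : Type*} [RCLike 𝕜]

theorem exists_common_eigenvector_of_tendsto_norm_atTop {U A A' B B' : ℕ → SL(2, 𝕜)}
    {LA LA' LB LB' : SL(2, 𝕜)}
    (hAB : ∀ i, SemiconjBy (U i) (A i) (B i)) (hAB' : ∀ i, SemiconjBy (U i) (A' i) (B' i))
    (hA : Tendsto A atTop (𝓝 LA)) (hA' : Tendsto A' atTop (𝓝 LA'))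
    (hB : Tendsto B atTop (𝓝 LB)) (hB' : Tendsto B' atTop (𝓝 LB'))
    (hU : Tendsto (fun i => ‖(U i : Matrix (Fin 2) (Fin 2) 𝕜)‖) atTop atTop) :
    ∃ v ≠ 0, (∃ μ : 𝕜, (LB : Matrix (Fin 2) (Fin 2) 𝕜) *ᵥ v = μ • v) ∧
      ∃ ν : 𝕜, (LB' : Matrix (Fin 2) (Fin 2) 𝕜) *ᵥ v = ν • v := by
  obtain ⟨c, hc, φ, hφ, S, hS₀, hS⟩ := exists_subseq_smul_tendsto_ne_zero (𝕜 := 𝕜) hU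
  have hdet : S.det = 0 := by
    refine tendsto_nhds_unique (((continuous_id.matrix_det).tendsto S).comp hS) ?_
    simpa [Function.comp_def, det_smul] using (hc.comp hφ.tendsto_atTop).pow 2
  have limit {A B : ℕ → SL(2, 𝕜)} {LA LB : SL(2, 𝕜)}
      (h : ∀ i, SemiconjBy (U i) (A i) (B i)) (hA : Tendsto A atTop (𝓝 LA))
      (hB : Tendsto B atTop (𝓝 LB)) :
      SemiconjBy S (LA : Matrix (Fin 2) (Fin 2) 𝕜) LB :=
    SemiconjBy.of_tendsto (M := Matrix (Fin 2) (Fin 2) 𝕜)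
      (fun k => ((h (φ k)).map coeMonoidHom).smul_left (c (φ k))) hS
      ((continuous_subtype_val.tendsto _).comp (hA.comp hφ.tendsto_atTop))
      ((continuous_subtype_val.tendsto _).comp (hB.comp hφ.tendsto_atTop))
  exact exists_common_eigenvector_of_semiconjBy hS₀ hdet (limit hAB hA hB) (limit hAB' hA' hB')

theorem exists_subseq_tendsto_of_not_tendsto_norm_atTop {n : Type*} [Fintype n] [DecidableEq n]
    {U : ℕ → SpecialLinearGroup n 𝕜}
    (hU : ¬ Tendsto (fun i => ‖(U i : Matrix n n 𝕜)‖) atTop atTop) :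
    ∃ φ : ℕ → ℕ, StrictMono φ ∧ ∃ L : SpecialLinearGroup n 𝕜, Tendsto (U ∘ φ) atTop (𝓝 L) := by
  obtain ⟨M, hM⟩ : ∃ M, ∃ᶠ i in atTop, (U i : Matrix n n 𝕜) ∈ Metric.ball 0 M := by
    simpa [tendsto_atTop, frequently_atTop] using hU
  have : ProperSpace (Matrix n n 𝕜) := FiniteDimensional.proper 𝕜 _
  obtain ⟨W, -, φ, hφ, hW⟩ := tendsto_subseq_of_frequently_bounded Metric.isBounded_ball hM
  obtain ⟨L, rfl⟩ : W ∈ Set.range ((↑) : SpecialLinearGroup n 𝕜 → Matrix n n 𝕜) :=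
    isClosedEmbedding_val.isClosed_range.mem_of_tendsto hW (Eventually.of_forall fun _ => ⟨_, rfl⟩)
  exact ⟨φ, hφ, L, isClosedEmbedding_val.tendsto_nhds_iff.2 hW⟩

end Matrix.SpecialLinearGroup

def convergenceSubgroup {ι Γ G : Type*} [Group Γ] [Group G] [TopologicalSpace G]
    [IsTopologicalGroup G] (l : Filter ι) (ρ : ι → Γ →* G) : Subgroup Γ where
  carrier := {g | ∃ L, Tendsto (fun i => ρ i g) l (𝓝 L)}
  one_mem' := ⟨1, by simp [tendsto_const_nhds]⟩
  mul_mem' := fun ⟨a, ha⟩ ⟨b, hb⟩ => ⟨a * b, by simpa using ha.mul hb⟩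
  inv_mem' := fun ⟨a, ha⟩ => ⟨a⁻¹, by simpa using ha.inv⟩

lemma slTendsto_iff {A : ℕ → SL2C} {L : SL2C} : SLTendsto A L ↔ Tendsto A atTop (𝓝 L) :=
  SpecialLinearGroup.isClosedEmbedding_val.tendsto_nhds_iff.symm

/-- HNN-extension convergence: if `Γ` is generated by a subgroup `Γ₀` together with one
element `t`, the restrictions of `ρ_i` to `Γ₀` converge, and there are `γ, δ ∈ Γ₀` with
`tγt⁻¹, tδt⁻¹ ∈ Γ₀` whose images converge to loxodromic elements with no common
eigenvector, then `(ρ_i t)` has a convergent subsequence, and consequently a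
subsequence of `ρ_i` converges on all of `Γ`. -/
theorem hnn_convergence {Γ : Type*} [Group Γ] (Γ₀ : Subgroup Γ) (t : Γ)
    (hgen : Subgroup.closure ((Γ₀ : Set Γ) ∪ {t}) = ⊤)
    (ρ : ℕ → Γ →* SL2C)
    (h1 : ∀ g ∈ Γ₀, ∃ L : SL2C, SLTendsto (fun i => ρ i g) L)
    (h2 : ∃ γ ∈ Γ₀, ∃ δ ∈ Γ₀, t * γ * t⁻¹ ∈ Γ₀ ∧ t * δ * t⁻¹ ∈ Γ₀ ∧
      ∃ Lγ Lδ : SL2C,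
        SLTendsto (fun i => ρ i γ) Lγ ∧ SLTendsto (fun i => ρ i δ) Lδ ∧
        Loxodromic Lγ ∧ Loxodromic Lδ ∧ NoCommonEigenvector Lγ Lδ) :
    (∃ φ : ℕ → ℕ, StrictMono φ ∧ ∃ L : SL2C, SLTendsto (fun k => ρ (φ k) t) L) ∧
    (∃ φ : ℕ → ℕ, StrictMono φ ∧
      ∀ g : Γ, ∃ L : SL2C, SLTendsto (fun k => ρ (φ k) g) L) := by
  obtain ⟨γ, -, δ, -, hγt, hδt, Lγ, Lδ, hLγ, hLδ, -, -, hno⟩ := h2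
  simp only [slTendsto_iff] at h1 hLγ hLδ ⊢
  obtain ⟨Lγt, hLγt⟩ := h1 _ hγt
  obtain ⟨Lδt, hLδt⟩ := h1 _ hδt
  have hconj (g : Γ) (i : ℕ) : SemiconjBy (ρ i t⁻¹) (ρ i (t * g * t⁻¹)) (ρ i g) :=
    SemiconjBy.map (by simp [SemiconjBy, mul_assoc]) (ρ i)
  have hbdd : ¬ Tendsto (fun i => ‖((ρ i t⁻¹ : SL2C) : Matrix (Fin 2) (Fin 2) ℂ)‖) atTop atTop :=
    fun h => hno (SpecialLinearGroup.exists_common_eigenvector_of_tendsto_norm_atTop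
      (hconj γ) (hconj δ) hLγt hLδt hLγ hLδ h)
  obtain ⟨φ, hφ, L, hL⟩ := SpecialLinearGroup.exists_subseq_tendsto_of_not_tendsto_norm_atTop hbdd
  have hΓ (g : Γ) : g ∈ convergenceSubgroup atTop (fun k => ρ (φ k)) := by
    refine (Subgroup.closure_le _).2 ?_ (hgen ▸ Subgroup.mem_top g)
    rintro g (hg | rfl)
    · obtain ⟨L, hL⟩ := h1 g hg
      exact ⟨L, hL.comp hφ.tendsto_atTop⟩
    · exact inv_inv g ▸ Subgroup.inv_mem _ ⟨L, hL⟩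
  exact ⟨⟨φ, hφ, hΓ t⟩, φ, hφ, hΓ⟩
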